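/- For every p ∈ ℝ³ with p ≠ 0: the matrix τ(p) is Hermitian and satisfies τ(p)² = 𝟙₁₆; consequently P₊(p) and P₋(p) are Hermitian idempotent matrices (orthogonal projections) with P₊(p) + P₋(p) = 𝟙₁₆ and P₊(p)·P₋(p) = 0; moreover the kernel of M⁻·p equals the range of P₋(p), i.e. ker(M⁻·p) = { v ∈ ℂ¹⁶ : P₋(p) v = v }. -/
import Mathlib

noncomputable section
open MeasureTheory Matrix Complex Filter Topology
open scoped Kronecker ENNReal InnerProductSpace RealInnerProductSpace

/-- Pauli matrices -/
def σ1 : Matrix (Fin 2) (Fin 2) ℂ := !![0, 1; 1, 0]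
def σ2 : Matrix (Fin 2) (Fin 2) ℂ := !![0, -I; I, 0]
def σ3 : Matrix (Fin 2) (Fin 2) ℂ := !![1, 0; 0, -1]

/-- Dirac alpha matrices in standard representation -/
def diracAlpha' (s : Matrix (Fin 2) (Fin 2) ℂ) : Matrix (Fin 4) (Fin 4) ℂ :=
  Matrix.reindex finSumFinEquiv finSumFinEquiv (Matrix.fromBlocks 0 s s 0)

def diracAlpha : Fin 3 → Matrix (Fin 4) (Fin 4) ℂ
  | 0 => diracAlpha' σ1
  | 1 => diracAlpha' σ2
  | 2 => diracAlpha' σ3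

def diracBeta : Matrix (Fin 4) (Fin 4) ℂ :=
  Matrix.reindex finSumFinEquiv finSumFinEquiv
    (Matrix.fromBlocks (1 : Matrix (Fin 2) (Fin 2) ℂ) 0 0 (-1 : Matrix (Fin 2) (Fin 2) ℂ))

abbrev R3 := EuclideanSpace ℝ (Fin 3)
abbrev C16 := EuclideanSpace ℂ (Fin 16)

/-- α·p -/
def alphaDot (p : R3) : Matrix (Fin 4) (Fin 4) ℂ :=
  ∑ j : Fin 3, (p j : ℂ) • diracAlpha j

/-- reindexing 4×4 Kronecker products to 16×16 matrices -/
def kron16 (A B : Matrix (Fin 4) (Fin 4) ℂ) : Matrix (Fin 16) (Fin 16) ℂ :=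
  Matrix.reindex finProdFinEquiv finProdFinEquiv (A ⊗ₖ B)

/-- M⁻·p -/
def Mminus (p : R3) : Matrix (Fin 16) (Fin 16) ℂ :=
  kron16 (alphaDot p) 1 - kron16 1 (alphaDot p)

/-- P·M⁺ -/
def MplusDot (P : R3) : Matrix (Fin 16) (Fin 16) ℂ :=
  (2⁻¹ : ℂ) • (kron16 (alphaDot P) 1 + kron16 1 (alphaDot P))

/-- τ(p) -/
def tau (p : R3) : Matrix (Fin 16) (Fin 16) ℂ :=
  -((‖p‖ ^ 2 : ℝ) : ℂ)⁻¹ • kron16 (alphaDot p) (alphaDot p)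

def Pplus (p : R3) : Matrix (Fin 16) (Fin 16) ℂ := (2⁻¹ : ℂ) • (1 + tau p)
def Pminus (p : R3) : Matrix (Fin 16) (Fin 16) ℂ := (2⁻¹ : ℂ) • (1 - tau p)

def Bmat : Matrix (Fin 16) (Fin 16) ℂ := (2 : ℂ) • kron16 diracBeta diracBeta

/-! ### Auxiliary lemmas -/

lemma diracAlpha0_eq : diracAlpha 0 = !![0,0,0,1; 0,0,1,0; 0,1,0,0; 1,0,0,0] := by
  show diracAlpha' σ1 = _
  ext i j
  fin_cases i <;> fin_cases j <;>
    simp [diracAlpha', σ1, Matrix.reindex_apply, Matrix.submatrix_apply, finSumFinEquiv,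
      Fin.addCases, Matrix.fromBlocks, Fin.castLT, Fin.subNat,
      show ((3:Fin 4):ℕ) = 3 from rfl, Matrix.vecHead, Matrix.vecTail, Function.comp] <;> rfl

lemma diracAlpha1_eq : diracAlpha 1 = !![0,0,0,-I; 0,0,I,0; 0,-I,0,0; I,0,0,0] := by
  show diracAlpha' σ2 = _
  ext i j
  fin_cases i <;> fin_cases j <;>
    simp [diracAlpha', σ2, Matrix.reindex_apply, Matrix.submatrix_apply, finSumFinEquiv,
      Fin.addCases, Matrix.fromBlocks, Fin.castLT, Fin.subNat,
      show ((3:Fin 4):ℕ) = 3 from rfl, Matrix.vecHead, Matrix.vecTail, Function.comp] <;> rfl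

lemma diracAlpha2_eq : diracAlpha 2 = !![0,0,1,0; 0,0,0,-1; 1,0,0,0; 0,-1,0,0] := by
  show diracAlpha' σ3 = _
  ext i j
  fin_cases i <;> fin_cases j <;>
    simp [diracAlpha', σ3, Matrix.reindex_apply, Matrix.submatrix_apply, finSumFinEquiv,
      Fin.addCases, Matrix.fromBlocks, Fin.castLT, Fin.subNat,
      show ((3:Fin 4):ℕ) = 3 from rfl, Matrix.vecHead, Matrix.vecTail, Function.comp] <;> rfl

lemma alphaDot_eq (p : R3) : alphaDot p =
    !![0, 0, (p 2 : ℂ), (p 0 : ℂ) - I * (p 1 : ℂ);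
       0, 0, (p 0 : ℂ) + I * (p 1 : ℂ), -(p 2 : ℂ);
       (p 2 : ℂ), (p 0 : ℂ) - I * (p 1 : ℂ), 0, 0;
       (p 0 : ℂ) + I * (p 1 : ℂ), -(p 2 : ℂ), 0, 0] := by
  rw [alphaDot, Fin.sum_univ_three, diracAlpha0_eq, diracAlpha1_eq, diracAlpha2_eq]
  ext i j
  fin_cases i <;> fin_cases j <;>
    simp [Matrix.vecHead, Matrix.vecTail] <;> try ring

lemma norm_sq_cast (p : R3) : ((‖p‖ ^ 2 : ℝ) : ℂ) =
    (p 0 : ℂ) ^ 2 + (p 1 : ℂ) ^ 2 + (p 2 : ℂ) ^ 2 := by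
  have h : ‖p‖ ^ 2 = ∑ i, p i ^ 2 := by
    rw [EuclideanSpace.norm_eq]
    rw [Real.sq_sqrt (by positivity)]
    congr 1; ext i; rw [Real.norm_eq_abs, _root_.sq_abs]
  rw [h, Fin.sum_univ_three]; push_cast; ring

lemma alphaDot_sq (p : R3) :
    alphaDot p * alphaDot p = ((‖p‖ ^ 2 : ℝ) : ℂ) • 1 := by
  rw [alphaDot_eq, norm_sq_cast]
  ext i j
  fin_cases i <;> fin_cases j <;>
    simp [Matrix.mul_apply, Fin.sum_univ_four, Matrix.one_apply, Matrix.vecHead,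
      Matrix.vecTail] <;>
    ring_nf <;> simp only [I_sq] <;> ring

lemma alphaDot_herm (p : R3) : (alphaDot p)ᴴ = alphaDot p := by
  rw [alphaDot_eq]
  ext i j
  fin_cases i <;> fin_cases j <;>
    simp [Matrix.conjTranspose_apply, Complex.conj_ofReal, Matrix.vecHead, Matrix.vecTail] <;>
    try ring

lemma kron16_mul (A B C D : Matrix (Fin 4) (Fin 4) ℂ) :
    kron16 A B * kron16 C D = kron16 (A * C) (B * D) := by
  unfold kron16
  rw [Matrix.reindex_apply, Matrix.reindex_apply, Matrix.reindex_apply,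
    Matrix.submatrix_mul_equiv, Matrix.mul_kronecker_mul]

lemma kron16_one : kron16 1 1 = (1 : Matrix (Fin 16) (Fin 16) ℂ) := by
  unfold kron16
  rw [Matrix.one_kronecker_one, Matrix.reindex_apply, Matrix.submatrix_one_equiv]

lemma kron16_smul_left (c : ℂ) (A B : Matrix (Fin 4) (Fin 4) ℂ) :
    kron16 (c • A) B = c • kron16 A B := by
  unfold kron16; rw [Matrix.smul_kronecker]; rfl

lemma kron16_smul_right (c : ℂ) (A B : Matrix (Fin 4) (Fin 4) ℂ) :
    kron16 A (c • B) = c • kron16 A B := by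
  unfold kron16; rw [Matrix.kronecker_smul]; rfl

lemma kron16_conjTranspose (A B : Matrix (Fin 4) (Fin 4) ℂ) :
    (kron16 A B)ᴴ = kron16 Aᴴ Bᴴ := by
  ext i j
  simp [kron16, Matrix.conjTranspose_apply, Matrix.kroneckerMap_apply, mul_comm]

lemma smul_mul_smul16 (a b : ℂ) (M N : Matrix (Fin 16) (Fin 16) ℂ) :
    (a • M) * (b • N) = (a * b) • (M * N) := by
  rw [smul_mul_assoc, mul_smul_comm, smul_smul]

/-- STATEMENT 4: for `p ≠ 0`: `τ(p)` is Hermitian with `τ(p)² = 𝟙`; `P±(p)` are Hermitian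
idempotents summing to `𝟙` with `P₊(p)P₋(p) = 0`, and `ker (M⁻·p) = ran P₋(p)`. -/
theorem stmt4 (p : R3) (hp : p ≠ 0) :
    (tau p).IsHermitian ∧ tau p * tau p = 1 ∧
    (Pplus p).IsHermitian ∧ (Pminus p).IsHermitian ∧
    Pplus p * Pplus p = Pplus p ∧ Pminus p * Pminus p = Pminus p ∧
    Pplus p + Pminus p = 1 ∧ Pplus p * Pminus p = 0 ∧
    (∀ v : Fin 16 → ℂ, (Mminus p).mulVec v = 0 ↔ (Pminus p).mulVec v = v) := by
  set A := alphaDot p with hA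
  set n : ℂ := ((‖p‖ ^ 2 : ℝ) : ℂ) with hn_def
  have hn : n ≠ 0 := by
    simp only [hn_def, Complex.ofReal_ne_zero]
    exact pow_ne_zero _ (norm_ne_zero_iff.mpr hp)
  have hA2 : A * A = n • 1 := alphaDot_sq p
  set K : Matrix (Fin 16) (Fin 16) ℂ := kron16 A A with hK_def
  have hAH : Aᴴ = A := alphaDot_herm p
  have htau : tau p = (-n⁻¹) • K := by
    rw [tau]
  -- tau is Hermitian
  have htauH : (tau p).IsHermitian := by
    show (tau p)ᴴ = tau p
    rw [htau, hK_def, Matrix.conjTranspose_smul, kron16_conjTranspose, hAH]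
    simp [hn_def, Complex.conj_ofReal]
  -- K * K
  have hKK : K * K = (n * n) • 1 := by
    rw [hK_def, kron16_mul, hA2, kron16_smul_left, kron16_smul_right, kron16_one, smul_smul]
  have htau2 : tau p * tau p = 1 := by
    rw [htau, smul_mul_smul16, hKK, smul_smul]
    rw [show (-n⁻¹ * -n⁻¹) * (n * n) = (n⁻¹ * n) * (n⁻¹ * n) by ring,
      inv_mul_cancel₀ hn]
    simp
  -- Hermitian projections
  have htauH' : (tau p)ᴴ = tau p := htauH
  have hPpH : (Pplus p).IsHermitian := by
    show (Pplus p)ᴴ = Pplus p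
    rw [Pplus, Matrix.conjTranspose_smul, Matrix.conjTranspose_add,
      Matrix.conjTranspose_one, htauH']
    norm_num
  have hPmH : (Pminus p).IsHermitian := by
    show (Pminus p)ᴴ = Pminus p
    rw [Pminus, Matrix.conjTranspose_smul, Matrix.conjTranspose_sub,
      Matrix.conjTranspose_one, htauH']
    norm_num
  -- idempotence etc.
  have hPp2 : Pplus p * Pplus p = Pplus p := by
    rw [Pplus, smul_mul_smul16,
      show (1 + tau p) * (1 + tau p) = 1 + tau p + tau p + tau p * tau p by noncomm_ring,
      htau2]
    module
  have hPm2 : Pminus p * Pminus p = Pminus p := by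
    rw [Pminus, smul_mul_smul16,
      show (1 - tau p) * (1 - tau p) = 1 - tau p - tau p + tau p * tau p by noncomm_ring,
      htau2]
    module
  have hPsum : Pplus p + Pminus p = 1 := by
    rw [Pplus, Pminus]; module
  have hPpPm : Pplus p * Pminus p = 0 := by
    rw [Pplus, Pminus, smul_mul_smul16,
      show (1 + tau p) * (1 - tau p) = 1 + tau p - tau p - tau p * tau p by noncomm_ring,
      htau2]
    module
  -- kernel characterization
  set K1 : Matrix (Fin 16) (Fin 16) ℂ := kron16 A 1 with hK1_def
  set K2 : Matrix (Fin 16) (Fin 16) ℂ := kron16 1 A with hK2_def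
  have hM : Mminus p = K1 - K2 := rfl
  have hK11 : K1 * K1 = n • 1 := by
    rw [hK1_def, kron16_mul, hA2, one_mul, kron16_smul_left, kron16_one]
  have hK22 : K2 * K2 = n • 1 := by
    rw [hK2_def, kron16_mul, hA2, one_mul, kron16_smul_right, kron16_one]
  have hK12 : K1 * K2 = K := by rw [hK1_def, hK2_def, kron16_mul, mul_one, one_mul]
  have hK21 : K2 * K1 = K := by rw [hK1_def, hK2_def, kron16_mul, mul_one, one_mul]
  have hKtau : K = (-n) • tau p := by
    rw [htau, smul_smul]
    rw [show -n * -n⁻¹ = n * n⁻¹ by ring, mul_inv_cancel₀ hn, one_smul]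
  have hMM : Mminus p * Mminus p = ((4 : ℂ) * n) • Pplus p := by
    rw [hM, show (K1 - K2) * (K1 - K2) = K1 * K1 - K1 * K2 - K2 * K1 + K2 * K2 by noncomm_ring,
      hK11, hK12, hK21, hK22, hKtau, Pplus]
    module
  have hMtau : Mminus p * tau p = Mminus p := by
    have hMK : (K1 - K2) * K = (-n) • (K1 - K2) := by
      rw [Matrix.sub_mul, hK_def, hK1_def, hK2_def, kron16_mul, kron16_mul, hA2, one_mul,
        kron16_smul_left, kron16_smul_right]
      module
    rw [hM, htau, mul_smul_comm, hMK, smul_smul]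
    rw [show -n⁻¹ * -n = n⁻¹ * n by ring, inv_mul_cancel₀ hn, one_smul]
  have hMPm : Mminus p * Pminus p = 0 := by
    rw [Pminus, mul_smul_comm, Matrix.mul_sub, Matrix.mul_one, hMtau]
    simp
  refine ⟨htauH, htau2, hPpH, hPmH, hPp2, hPm2, hPsum, hPpPm, fun v => ⟨fun hv => ?_, fun hv => ?_⟩⟩
  · -- M v = 0 → Pminus v = v
    have h2 : (Mminus p * Mminus p).mulVec v = 0 := by
      rw [← Matrix.mulVec_mulVec, hv, Matrix.mulVec_zero]
    rw [hMM, Matrix.smul_mulVec, smul_eq_zero] at h2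
    have h4n : (4 : ℂ) * n ≠ 0 := mul_ne_zero (by norm_num) hn
    have hPv : (Pplus p).mulVec v = 0 := h2.resolve_left h4n
    have := congrArg (fun M => M.mulVec v) hPsum
    simpa [Matrix.add_mulVec, hPv, Matrix.one_mulVec] using this
  · -- Pminus v = v → M v = 0
    calc (Mminus p).mulVec v = (Mminus p).mulVec ((Pminus p).mulVec v) := by rw [hv]
    _ = (Mminus p * Pminus p).mulVec v := Matrix.mulVec_mulVec _ _ _
    _ = 0 := by rw [hMPm, Matrix.zero_mulVec]
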